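/- For any nonzero integer a divisible by 3 and any integer n ≥ 2, E_{2n,a} ≡ 2a·(3a-2)^{-1} + 9a^2 n^3 + 9a^2 n^2 - 3a^2 n (mod 3^{ord_3(n)+5}), where (3a-2)^{-1} is the inverse of 3a-2 modulo 3^{ord_3(n)+5} and ord_3(n) is the 3-adic valuation of n. -/

import Mathlib

/-!
The exponential generating function of `E_{n,a}` is
`1 / (1 + a (cosh x - 1)) = 2 eˣ / (a (eˣ - z) (eˣ - z⁻¹))`, where `z, z⁻¹` are the roots of
`a u² - 2 (a - 1) u + a = a (1 - u)² + 2 u`. When `3 ∣ a` this polynomial has a root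
`z ≡ 0 (mod 3)` (Hensel), and expanding in geometric series gives
`(1 + z) E_{2m} = 2 (1 - z) z ∑ᵢ zⁱ (i + 1)^{2m}` 3-adically; modulo `3^N` this holds with the sum
cut off at `i < 3N`, and it follows directly from the recurrence. In that sum the terms with
`3 ∣ i + 1` vanish modulo `3^N`, and for the others `(i + 1)^{2n} = (1 + d)^n` with `3 ∣ d`, so
modulo `3^{ord₃ n + 5}` only the binomial terms `C(n, j) dʲ` with `j ≤ 4` survive, because
`ord₃ C(n, j) ≥ ord₃ n - ord₃ j`. Their coefficients are evaluated from the first few terms of the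
sum and the relation `a (1 - z)² ≡ -2z`, which produce the cubic in `n`; the term `j = 0` is a
geometric series and gives `2a / (3a - 2)`.
-/

open Finset

def EZ (a : ℤ) : ℕ → ℤ
  | 0 => 1
  | n + 1 =>
      -a * ∑ k ∈ (Finset.Icc 1 ((n + 1) / 2)).attach,
        ((n + 1).choose (2 * k.1) : ℤ) * EZ a (n + 1 - 2 * k.1)
  decreasing_by
    have h := Finset.mem_Icc.mp k.2
    omega

lemma EZ_zero (a : ℤ) : EZ a 0 = 1 := by rw [EZ]

lemma EZ_two_mul (a : ℤ) {m : ℕ} (hm : m ≠ 0) :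
    EZ a (2 * m) = -a * ∑ k ∈ Icc 1 m, ((2 * m).choose (2 * k) : ℤ) * EZ a (2 * m - 2 * k) := by
  obtain ⟨m, rfl⟩ := Nat.exists_eq_succ_of_ne_zero hm
  rw [show 2 * m.succ = (2 * m + 1) + 1 by omega, EZ, show (2 * m + 1 + 1) / 2 = m.succ by omega,
    sum_attach (Icc 1 m.succ)
      fun k => ((2 * m + 1 + 1).choose (2 * k) : ℤ) * EZ a (2 * m + 1 + 1 - 2 * k)]

lemma sum_range_two_mul_add_one {M : Type*} [AddCommMonoid M] (g : ℕ → M) (m : ℕ) :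
    ∑ i ∈ range (2 * m + 1), g i
      = ∑ k ∈ range (m + 1), g (2 * k) + ∑ k ∈ range m, g (2 * k + 1) := by
  induction m with
  | zero => simp
  | succ m ih =>
    rw [show 2 * (m + 1) + 1 = 2 * m + 1 + 1 + 1 by ring, sum_range_succ, sum_range_succ, ih,
      sum_range_succ (fun k => g (2 * k)) (m + 1), sum_range_succ (fun k => g (2 * k + 1)) m,
      show 2 * (m + 1) = 2 * m + 1 + 1 by ring]
    abel

lemma add_one_pow_add_sub_one_pow (x : ℤ) (m : ℕ) :
    (x + 1) ^ (2 * m) + (x - 1) ^ (2 * m)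
      = 2 * ∑ k ∈ range (m + 1), ((2 * m).choose (2 * k) : ℤ) * x ^ (2 * m - 2 * k) := by
  rw [add_comm x, sub_eq_neg_add, add_pow, add_pow, ← sum_add_distrib, sum_range_two_mul_add_one,
    mul_sum]
  simp only [one_pow, one_mul, Int.reduceNeg, pow_mul, pow_succ, pow_zero, mul_neg, mul_one,
    neg_neg, neg_mul, add_neg_cancel, sum_const_zero, add_zero]
  refine sum_congr rfl fun k _ => by ring

lemma two_mul_sum_Icc_choose_mul_pow (x : ℤ) (m : ℕ) :
    2 * ∑ k ∈ Icc 1 m, ((2 * m).choose (2 * k) : ℤ) * x ^ (2 * m - 2 * k)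
      = (x + 1) ^ (2 * m) + (x - 1) ^ (2 * m) - 2 * x ^ (2 * m) := by
  rw [add_one_pow_add_sub_one_pow, range_eq_Ico, Ico_add_one_right_eq_Icc,
    ← add_sum_Ioc_eq_sum_Icc (Nat.zero_le m), ← Icc_add_one_left_eq_Ioc]
  simp only [mul_zero, Nat.choose_zero_right, Nat.cast_one, tsub_zero, one_mul, zero_add]
  ring

def twistedPowSum (z : ℤ) (L e : ℕ) : ℤ := ∑ i ∈ range L, z ^ i * ((i : ℤ) + 1) ^ e

lemma mul_sum_pow_mul_add_two_pow (z : ℤ) (L e : ℕ) :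
    z * ∑ i ∈ range L, z ^ i * ((i : ℤ) + 2) ^ e
      = twistedPowSum z L e - 1 + z ^ L * ((L : ℤ) + 1) ^ e := by
  have h := (sum_range_succ' (fun i => z ^ i * ((i : ℤ) + 1) ^ e) L).symm.trans
    (sum_range_succ _ L)
  simp only [Nat.cast_add, Nat.cast_one, pow_zero, Nat.cast_zero, zero_add, one_pow,
    mul_one] at h
  rw [twistedPowSum, mul_sum]
  linear_combination (sum_congr rfl fun i _ => by ring :
    ∑ i ∈ range L, z * (z ^ i * ((i : ℤ) + 2) ^ e)
      = ∑ i ∈ range L, z ^ (i + 1) * ((i : ℤ) + 1 + 1) ^ e) + h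

lemma sum_pow_mul_cast_pow (z : ℤ) (L : ℕ) {e : ℕ} (he : e ≠ 0) :
    ∑ i ∈ range L, z ^ i * (i : ℤ) ^ e = z * twistedPowSum z L e - z ^ L * (L : ℤ) ^ e := by
  have h := (sum_range_succ' (fun i => z ^ i * (i : ℤ) ^ e) L).symm.trans (sum_range_succ _ L)
  simp only [Nat.cast_add, Nat.cast_one, pow_zero, Nat.cast_zero, zero_pow he, mul_zero,
    add_zero] at h
  rw [twistedPowSum, mul_sum]
  linear_combination -h + (sum_congr rfl fun i _ => by ring :
    ∑ i ∈ range L, z ^ (i + 1) * ((i : ℤ) + 1) ^ e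
      = ∑ i ∈ range L, z * (z ^ i * ((i : ℤ) + 1) ^ e))

lemma two_mul_sum_choose_mul_twistedPowSum (z : ℤ) (L m : ℕ) :
    2 * ∑ k ∈ Icc 1 m, ((2 * m).choose (2 * k) : ℤ) * twistedPowSum z L (2 * m - 2 * k)
      = ∑ i ∈ range L, z ^ i * ((i : ℤ) + 2) ^ (2 * m) + ∑ i ∈ range L, z ^ i * (i : ℤ) ^ (2 * m)
        - 2 * twistedPowSum z L (2 * m) := by
  simp only [twistedPowSum, mul_sum]
  rw [sum_comm, ← sum_add_distrib, ← sum_sub_distrib]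
  refine sum_congr rfl fun i _ => ?_
  have h := two_mul_sum_Icc_choose_mul_pow ((i : ℤ) + 1) m
  rw [show (i : ℤ) + 1 + 1 = i + 2 by ring, add_sub_cancel_right] at h
  rw [show ∑ k ∈ Icc 1 m,
        2 * (((2 * m).choose (2 * k) : ℤ) * (z ^ i * ((i : ℤ) + 1) ^ (2 * m - 2 * k)))
      = z ^ i * (2 * ∑ k ∈ Icc 1 m, ((2 * m).choose (2 * k) : ℤ) * ((i : ℤ) + 1) ^ (2 * m - 2 * k))
    by rw [mul_sum, mul_sum]; exact sum_congr rfl fun _ _ => by ring, h]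
  ring

theorem one_add_mul_EZ_modEq {a z M : ℤ} {L : ℕ} (hF : M ∣ a * (1 - z) ^ 2 + 2 * z)
    (hzL : M ∣ z ^ L) {m : ℕ} (hm : m ≠ 0) :
    (1 + z) * EZ a (2 * m) ≡ 2 * (1 - z) * z * twistedPowSum z L (2 * m) [ZMOD M] := by
  induction m using Nat.strong_induction_on with
  | _ m ih =>
  obtain ⟨m, rfl⟩ := Nat.exists_eq_succ_of_ne_zero hm
  have htop : 1 + z ≡ 2 * (1 - z) * z * twistedPowSum z L 0 + (1 - z) [ZMOD M] := by
    have hG : twistedPowSum z L 0 * (z - 1) = z ^ L - 1 := by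
      simpa [twistedPowSum] using geom_sum_mul z L
    refine Int.modEq_iff_dvd.mpr ?_
    rw [show 2 * (1 - z) * z * twistedPowSum z L 0 + (1 - z) - (1 + z) = -2 * z * z ^ L by
      linear_combination (-2 * z) * hG]
    exact hzL.mul_left _
  -- only the top term `k = m + 1`, which involves `E_0 = 1`, deviates from the inductive claim
  have hsum : ∑ k ∈ Icc 1 (m + 1), ((2 * (m + 1)).choose (2 * k) : ℤ)
        * ((1 + z) * EZ a (2 * (m + 1) - 2 * k))
      ≡ 2 * (1 - z) * z * ∑ k ∈ Icc 1 (m + 1), ((2 * (m + 1)).choose (2 * k) : ℤ)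
        * twistedPowSum z L (2 * (m + 1) - 2 * k) + (1 - z) [ZMOD M] := by
    rw [sum_Icc_succ_top (by omega), sum_Icc_succ_top (by omega), Nat.choose_self, Nat.sub_self,
      EZ_zero, Nat.cast_one, one_mul, one_mul, mul_one, mul_add (2 * (1 - z) * z), mul_sum,
      add_assoc]
    refine Int.ModEq.add (Int.ModEq.sum fun k hk => ?_) htop
    obtain ⟨hk1, hkm⟩ := mem_Icc.mp hk
    rw [show 2 * (m + 1) - 2 * k = 2 * (m + 1 - k) by omega, mul_left_comm (2 * (1 - z) * z)]
    exact (ih (m + 1 - k) (by omega) (by omega)).mul_left _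
  have hX := two_mul_sum_choose_mul_twistedPowSum z L (m + 1)
  have hP1 := mul_sum_pow_mul_add_two_pow z L (2 * (m + 1))
  have hP2 := sum_pow_mul_cast_pow z L (e := 2 * (m + 1)) (by omega)
  set T := twistedPowSum z L (2 * (m + 1))
  calc (1 + z) * EZ a (2 * (m + 1))
      = -a * ∑ k ∈ Icc 1 (m + 1), ((2 * (m + 1)).choose (2 * k) : ℤ)
          * ((1 + z) * EZ a (2 * (m + 1) - 2 * k)) := by
        rw [EZ_two_mul a m.succ_ne_zero, mul_sum, mul_sum, mul_sum]
        exact sum_congr rfl fun k _ => by ring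
    _ ≡ -a * (2 * (1 - z) * z * ∑ k ∈ Icc 1 (m + 1), ((2 * (m + 1)).choose (2 * k) : ℤ)
        * twistedPowSum z L (2 * (m + 1) - 2 * k) + (1 - z)) [ZMOD M] := hsum.mul_left _
    _ = 2 * (1 - z) * z * T - (1 - z) * T * (a * (1 - z) ^ 2 + 2 * z)
        - a * (1 - z) * z ^ L * (((L : ℤ) + 1) ^ (2 * (m + 1)) - z * (L : ℤ) ^ (2 * (m + 1))) := by
        linear_combination (-a * (1 - z) * z) * hX + (-a * (1 - z)) * hP1
          + (-a * (1 - z) * z) * hP2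
    _ ≡ 2 * (1 - z) * z * T [ZMOD M] := by
        refine Int.modEq_iff_dvd.mpr ?_
        rw [show ∀ x y w : ℤ, x - (x - y - w) = y + w from fun _ _ _ => by ring]
        exact dvd_add (hF.mul_left _) ((hzL.mul_left _).mul_right _)

lemma exists_three_dvd_root {a : ℤ} (ha : 3 ∣ a) (k : ℕ) :
    ∃ z : ℤ, 3 ∣ z ∧ 3 ^ k ∣ a * (1 - z) ^ 2 + 2 * z := by
  induction k with
  | zero => exact ⟨0, dvd_zero 3, by simp⟩
  | succ k ih =>
    obtain ⟨z, hz, hF⟩ := ih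
    -- Newton step: since `3 ∣ a`, the derivative `2 - 2a(1 - z)` is `≡ -1 (mod 3)`
    refine ⟨z + (a * (1 - z) ^ 2 + 2 * z),
      dvd_add hz (dvd_add (ha.mul_right _) (hz.mul_left _)), ?_⟩
    rw [show a * (1 - (z + (a * (1 - z) ^ 2 + 2 * z))) ^ 2 + 2 * (z + (a * (1 - z) ^ 2 + 2 * z))
        = (a * (1 - z) ^ 2 + 2 * z) * (3 - 2 * a * (1 - z) + a * (a * (1 - z) ^ 2 + 2 * z)) by ring,
      pow_succ]
    exact mul_dvd_mul hF (dvd_add (dvd_sub (dvd_refl 3) ((ha.mul_left 2).mul_right _))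
      (ha.mul_right _))

lemma pow_dvd_choose_mul {p v n : ℕ} (hn : p ^ v ∣ n) (j : ℕ) : p ^ v ∣ n.choose j * j := by
  rcases n with _ | n
  · rcases j with _ | j <;> simp
  rcases j with _ | j
  · simp
  rw [← Nat.add_one_mul_choose_eq]
  exact hn.mul_right _

lemma add_five_le_of_three_pow_dvd {d j : ℕ} (hj : 5 ≤ j) (hd : 3 ^ d ∣ j) : d + 5 ≤ j := by
  obtain ⟨e, rfl⟩ := hd
  have he : 1 ≤ e := Nat.pos_of_ne_zero (by rintro rfl; omega)
  rcases d with _ | _ | d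
  · omega
  · omega
  · have := Nat.lt_pow_self (n := d) (by norm_num : 1 < 3)
    have : 3 ^ (d + 2) = 9 * 3 ^ d := by ring
    nlinarith

lemma three_pow_dvd_choose_mul_pow {v n j : ℕ} {x : ℤ} (hn : 3 ^ v ∣ n) (hj : 5 ≤ j)
    (hx : 3 ∣ x) : 3 ^ (v + 5) ∣ (n.choose j : ℤ) * x ^ j := by
  set d := j.factorization 3
  have hdj : 3 ^ d * ordCompl[3] j = j := Nat.ordProj_mul_ordCompl_eq_self j 3
  have hcop : Nat.Coprime (3 ^ v) (ordCompl[3] j) :=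
    Nat.Coprime.pow_left v (Nat.coprime_ordCompl Nat.prime_three (by omega))
  have hv : 3 ^ v ∣ n.choose j * 3 ^ d :=
    hcop.dvd_of_dvd_mul_right (by rw [mul_assoc, hdj]; exact pow_dvd_choose_mul hn j)
  have hd : d + 5 ≤ j := add_five_le_of_three_pow_dvd hj ⟨_, hdj.symm⟩
  have hN : 3 ^ (v + 5) ∣ n.choose j * 3 ^ j :=
    calc 3 ^ (v + 5) = 3 ^ v * 3 ^ 5 := pow_add _ _ _
      _ ∣ n.choose j * 3 ^ d * 3 ^ 5 := mul_dvd_mul_right hv _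
      _ = n.choose j * 3 ^ (d + 5) := by ring
      _ ∣ n.choose j * 3 ^ j := mul_dvd_mul_left _ (pow_dvd_pow 3 hd)
  exact (Int.natCast_dvd_natCast.mpr hN).trans
    (by push_cast; exact mul_dvd_mul_left _ (pow_dvd_pow_of_dvd hx j))

lemma one_add_pow_modEq {v n : ℕ} {x : ℤ} (hn : 3 ^ v ∣ n) (hx : 3 ∣ x) :
    (1 + x) ^ n ≡ ∑ j ∈ range 5, (n.choose j : ℤ) * x ^ j [ZMOD 3 ^ (v + 5)] := by
  have hexp : (1 + x) ^ n = ∑ j ∈ range (n + 5), (n.choose j : ℤ) * x ^ j := by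
    rw [add_comm, add_pow]
    refine (sum_subset (range_subset_range.mpr (by omega : n + 1 ≤ n + 5))
      fun j hj hjn => ?_).trans ?_
    · rw [Nat.choose_eq_zero_of_lt (by simp only [mem_range] at hj hjn; omega)]; simp
    · exact sum_congr rfl fun j _ => by ring
  rw [hexp, ← sum_range_add_sum_Ico _ (by omega : 5 ≤ n + 5)]
  refine Int.modEq_iff_dvd.mpr ?_
  rw [sub_add_cancel_left, dvd_neg]
  exact dvd_sum fun j hj => three_pow_dvd_choose_mul_pow hn (mem_Ico.mp hj).1 hx

lemma choose_two_mul_two (n : ℕ) : (n.choose 2 : ℤ) * 2 = n * (n - 1) := by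
  rw [← Nat.cast_descFactorial_two, Nat.descFactorial_eq_factorial_mul_choose]
  push_cast [Nat.factorial]
  ring

lemma choose_three_mul_six (n : ℕ) : (n.choose 3 : ℤ) * 6 = n * (n - 1) * (n - 2) := by
  rcases n with _ | n
  · simp
  have h : ((n : ℤ) + 1) * n.choose 2 = (n + 1).choose 3 * 3 := by
    exact_mod_cast Nat.add_one_mul_choose_eq n 2
  push_cast
  linear_combination (-2) * h + ((n : ℤ) + 1) * choose_two_mul_two n

lemma sum_range_three_mul {M : Type*} [AddCommMonoid M] (g : ℕ → M) (K : ℕ) :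
    ∑ i ∈ range (3 * K), g i = ∑ s ∈ range K, (g (3 * s) + g (3 * s + 1) + g (3 * s + 2)) := by
  induction K with
  | zero => simp
  | succ K ih =>
    rw [show 3 * (K + 1) = 3 * K + 1 + 1 + 1 by ring, sum_range_succ, sum_range_succ,
      sum_range_succ, ih, sum_range_succ]
    simp only [add_assoc]

/-- The part of `twistedPowSum z (3 * K) (2 * n)` over the indices `i` with `3 ∤ i + 1`, with
`(i + 1) ^ (2 * n)` replaced by the `j`-th term of its expansion in powers of `(i + 1) ^ 2 - 1`. -/
def theta (z : ℤ) (K j : ℕ) : ℤ :=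
  ∑ s ∈ range K, (z ^ (3 * s) * ((3 * (s : ℤ) + 1) ^ 2 - 1) ^ j
    + z ^ (3 * s + 1) * ((3 * (s : ℤ) + 2) ^ 2 - 1) ^ j)

lemma twistedPowSum_modEq_sum_theta {z : ℤ} {v n : ℕ} (hz : 3 ∣ z) (hn : 2 ≤ n)
    (hvn : 3 ^ v ∣ n) :
    twistedPowSum z (3 * (v + 5)) (2 * n)
      ≡ ∑ j ∈ range 5, (n.choose j : ℤ) * theta z (v + 5) j [ZMOD 3 ^ (v + 5)] := by
  have hv : v + 5 ≤ 2 * n + 2 := by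
    have := Nat.le_of_dvd (by omega) hvn
    have := Nat.lt_pow_self (n := v) (by norm_num : 1 < 3)
    omega
  rw [twistedPowSum, sum_range_three_mul]
  simp only [theta, mul_sum]
  rw [sum_comm]
  refine Int.ModEq.sum fun s _ => ?_
  have h1 : 3 ∣ (3 * (s : ℤ) + 1) ^ 2 - 1 := ⟨3 * (s : ℤ) ^ 2 + 2 * s, by ring⟩
  have h2 : 3 ∣ (3 * (s : ℤ) + 2) ^ 2 - 1 := ⟨3 * (s : ℤ) ^ 2 + 4 * s + 1, by ring⟩
  have h3 : (3 : ℤ) ^ (v + 5) ∣ z ^ (3 * s + 2) * (((3 * s + 2 : ℕ) : ℤ) + 1) ^ (2 * n) :=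
    calc (3 : ℤ) ^ (v + 5) ∣ 3 ^ (2 + 2 * n) := pow_dvd_pow 3 (by omega)
      _ = 3 ^ 2 * 3 ^ (2 * n) := pow_add _ _ _
      _ ∣ z ^ (3 * s + 2) * (((3 * s + 2 : ℕ) : ℤ) + 1) ^ (2 * n) :=
        mul_dvd_mul ((pow_dvd_pow_of_dvd hz 2).trans (pow_dvd_pow z (by omega)))
          (pow_dvd_pow_of_dvd ⟨(s : ℤ) + 1, by push_cast; ring⟩ _)
  calc z ^ (3 * s) * (((3 * s : ℕ) : ℤ) + 1) ^ (2 * n)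
        + z ^ (3 * s + 1) * (((3 * s + 1 : ℕ) : ℤ) + 1) ^ (2 * n)
        + z ^ (3 * s + 2) * (((3 * s + 2 : ℕ) : ℤ) + 1) ^ (2 * n)
      = z ^ (3 * s) * (1 + ((3 * (s : ℤ) + 1) ^ 2 - 1)) ^ n
        + z ^ (3 * s + 1) * (1 + ((3 * (s : ℤ) + 2) ^ 2 - 1)) ^ n
        + z ^ (3 * s + 2) * (((3 * s + 2 : ℕ) : ℤ) + 1) ^ (2 * n) := by
        push_cast; simp only [pow_mul]; ring
    _ ≡ z ^ (3 * s) * ∑ j ∈ range 5, (n.choose j : ℤ) * ((3 * (s : ℤ) + 1) ^ 2 - 1) ^ j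
        + z ^ (3 * s + 1) * ∑ j ∈ range 5, (n.choose j : ℤ) * ((3 * (s : ℤ) + 2) ^ 2 - 1) ^ j
        + 0 [ZMOD 3 ^ (v + 5)] := by
      gcongr
      · exact one_add_pow_modEq hvn h1
      · exact one_add_pow_modEq hvn h2
      · exact Int.modEq_zero_iff_dvd.mpr h3
    _ = _ := by
      rw [add_zero, mul_sum, mul_sum, ← sum_add_distrib]
      exact sum_congr rfl fun _ _ => by ring

lemma theta_zero_modEq {a z M : ℤ} {K : ℕ} (hF : M ∣ a * (1 - z) ^ 2 + 2 * z)
    (hzK : M ∣ z ^ (3 * K)) :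
    (3 * a - 2) * (2 * (1 - z) * z * theta z K 0) ≡ 2 * a * (1 + z) [ZMOD M] := by
  have hG := geom_sum_mul (z ^ 3) K
  have hθ : theta z K 0 = (1 + z) * ∑ s ∈ range K, (z ^ 3) ^ s := by
    rw [theta, mul_sum]
    exact sum_congr rfl fun s _ => by ring
  set G := ∑ s ∈ range K, (z ^ 3) ^ s
  refine Int.modEq_iff_dvd.mpr ?_
  rw [hθ, show 2 * a * (1 + z) - (3 * a - 2) * (2 * (1 - z) * z * ((1 + z) * G))
      = 2 * (1 - z) * (1 + z) * G * (a * (1 - z) ^ 2 + 2 * z) + 2 * a * (1 + z) * z ^ (3 * K) by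
    rw [pow_mul]; linear_combination (2 * a * (1 + z)) * hG]
  exact dvd_add (hF.mul_left _) (hzK.mul_left _)

lemma theta_modEq {z : ℤ} {K j : ℕ} (hz : 3 ∣ z) (hK : 2 ≤ K) (hj : j ≠ 0) :
    theta z K j ≡ 3 ^ j * z + 15 ^ j * z ^ 3 + 24 ^ j * z ^ 4 [ZMOD 3 ^ 6] := by
  obtain ⟨K, rfl⟩ := Nat.exists_eq_add_of_le' hK
  have h6 : ∀ e ≥ 6, (3 : ℤ) ^ 6 ∣ z ^ e :=
    fun e he => (pow_dvd_pow_of_dvd hz 6).trans (pow_dvd_pow z he)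
  have htail : (3 : ℤ) ^ 6 ∣ ∑ s ∈ range K,
      (z ^ (3 * (s + 1 + 1)) * ((3 * ((s + 1 + 1 : ℕ) : ℤ) + 1) ^ 2 - 1) ^ j
        + z ^ (3 * (s + 1 + 1) + 1) * ((3 * ((s + 1 + 1 : ℕ) : ℤ) + 2) ^ 2 - 1) ^ j) :=
    dvd_sum fun s _ => dvd_add ((h6 _ (by omega)).mul_right _) ((h6 _ (by omega)).mul_right _)
  rw [theta, sum_range_succ', sum_range_succ', add_assoc]
  convert (Int.modEq_zero_iff_dvd.mpr htail).add_right (3 ^ j * z + 15 ^ j * z ^ 3 + 24 ^ j * z ^ 4)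
    using 1
  · simp only [Nat.cast_add, Nat.cast_one, zero_add, mul_one, Int.reduceAdd, Int.reducePow,
      Int.reduceSub, Nat.reduceAdd, mul_zero, pow_zero, CharP.cast_eq_zero, one_pow, sub_self,
      zero_pow hj, pow_one, add_right_inj]
    ring
  · ring

lemma three_pow_dvd_of_dvd_two_mul {k : ℕ} {x : ℤ} (h : 3 ^ k ∣ 2 * x) : 3 ^ k ∣ x :=
  (IsCoprime.pow_left (Int.isCoprime_iff_gcd_eq_one.mpr rfl)).dvd_of_dvd_mul_left h

-- Write `a = 3c`, `z = 3w` and `F = a (1 - z)² + 2z = 3⁵ φ`. The witnesses below come from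
-- `4z² = a² (1 - z)⁴ + (2z - a (1 - z)²) F`, which turns `2 (1 - z) z θ` into `a² (1 - z)⁵` plus
-- multiples of `F` and of `z⁴`.
lemma theta_one_modEq {a z : ℤ} {K : ℕ} (ha : 3 ∣ a) (hz : 3 ∣ z)
    (hF : 3 ^ 5 ∣ a * (1 - z) ^ 2 + 2 * z) (hK : 2 ≤ K) :
    2 * (1 - z) * z * theta z K 1 ≡ 15 * a ^ 2 * (1 + z) [ZMOD 3 ^ 5] := by
  refine (((theta_modEq hz hK one_ne_zero).mul_left _).of_dvd (pow_dvd_pow 3 (by norm_num))).trans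
    (Int.modEq_iff_dvd.mpr (three_pow_dvd_of_dvd_two_mul ?_))
  obtain ⟨c, rfl⟩ := ha
  obtain ⟨w, rfl⟩ := hz
  obtain ⟨φ, hφ⟩ := hF
  refine ⟨-(c ^ 2 * (-1 - 5 * w + 10 * w ^ 2 - 30 * w ^ 3 + 45 * w ^ 4 - 27 * w ^ 5)
    + 9 * (1 - 3 * w) * (2 * w - c * (1 - 3 * w) ^ 2) * φ
    + 4 * w ^ 4 * (1 - 3 * w) * (5 + 24 * w)), ?_⟩
  linear_combination (-3 * (1 - 3 * w) * (6 * w - 3 * c * (1 - 3 * w) ^ 2)) * hφ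

lemma theta_two_modEq {a z : ℤ} {K : ℕ} (ha : 3 ∣ a) (hz : 3 ∣ z)
    (hF : 3 ^ 5 ∣ a * (1 - z) ^ 2 + 2 * z) (hK : 2 ≤ K) :
    2 * (1 - z) * z * theta z K 2 ≡ 72 * a ^ 2 * (1 + z) [ZMOD 3 ^ 5] := by
  refine (((theta_modEq hz hK two_ne_zero).mul_left _).of_dvd (pow_dvd_pow 3 (by norm_num))).trans
    (Int.modEq_iff_dvd.mpr (three_pow_dvd_of_dvd_two_mul ?_))
  obtain ⟨c, rfl⟩ := ha
  obtain ⟨w, rfl⟩ := hz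
  obtain ⟨φ, hφ⟩ := hF
  refine ⟨-(c ^ 2 * (-5 - 21 * w + 30 * w ^ 2 - 90 * w ^ 3 + 135 * w ^ 4 - 81 * w ^ 5)
    + 27 * (1 - 3 * w) * (2 * w - c * (1 - 3 * w) ^ 2) * φ
    + 4 * w ^ 4 * (1 - 3 * w) * (75 + 576 * w)), ?_⟩
  linear_combination (-9 * (1 - 3 * w) * (6 * w - 3 * c * (1 - 3 * w) ^ 2)) * hφ

lemma theta_three_modEq {a z : ℤ} {K : ℕ} (ha : 3 ∣ a) (hz : 3 ∣ z)
    (hF : 3 ^ 5 ∣ a * (1 - z) ^ 2 + 2 * z) (hK : 2 ≤ K) :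
    2 * (1 - z) * z * theta z K 3 ≡ 54 * a ^ 2 * (1 + z) [ZMOD 3 ^ 6] := by
  refine ((theta_modEq hz hK three_ne_zero).mul_left _).trans
    (Int.modEq_iff_dvd.mpr (three_pow_dvd_of_dvd_two_mul ?_))
  obtain ⟨c, rfl⟩ := ha
  obtain ⟨w, rfl⟩ := hz
  obtain ⟨φ, hφ⟩ := hF
  refine ⟨-(c ^ 2 * (-1 - 9 * w + 30 * w ^ 2 - 90 * w ^ 3 + 135 * w ^ 4 - 81 * w ^ 5)
    + 27 * (1 - 3 * w) * (2 * w - c * (1 - 3 * w) ^ 2) * φ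
    + 4 * w ^ 4 * (1 - 3 * w) * (375 + 4608 * w)), ?_⟩
  linear_combination (-27 * (1 - 3 * w) * (6 * w - 3 * c * (1 - 3 * w) ^ 2)) * hφ

lemma theta_four_modEq {z : ℤ} {K : ℕ} (hz : 3 ∣ z) (hK : 2 ≤ K) :
    2 * (1 - z) * z * theta z K 4 ≡ 0 [ZMOD 3 ^ 5] := by
  refine (((theta_modEq hz hK four_ne_zero).mul_left _).of_dvd (pow_dvd_pow 3 (by norm_num))).trans
    (Int.modEq_zero_iff_dvd.mpr ?_)
  obtain ⟨w, rfl⟩ := hz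
  exact ⟨2 * (1 - 3 * w) * w * (3 * w + 16875 * w ^ 3 + 331776 * w ^ 4), by ring⟩

theorem twistedPowSum_modEq {a z : ℤ} {v n : ℕ} (ha : 3 ∣ a) (hz : 3 ∣ z) (hn : 2 ≤ n)
    (hvn : 3 ^ v ∣ n) (hF : 3 ^ (v + 5) ∣ a * (1 - z) ^ 2 + 2 * z) :
    (3 * a - 2) * (2 * (1 - z) * z * twistedPowSum z (3 * (v + 5)) (2 * n))
      ≡ (1 + z) * (2 * a + (3 * a - 2) * a ^ 2 * (9 * n ^ 3 + 9 * n ^ 2 - 3 * n))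
        [ZMOD 3 ^ (v + 5)] := by
  have hF5 : 3 ^ 5 ∣ a * (1 - z) ^ 2 + 2 * z := (pow_dvd_pow 3 (by omega)).trans hF
  have hK : 2 ≤ v + 5 := by omega
  have hC (j : ℕ) : (3 : ℤ) ^ v ∣ n.choose j * j := by exact_mod_cast pow_dvd_choose_mul hvn j
  have hscale {c x y : ℤ} {k : ℕ} (h : x ≡ y [ZMOD 3 ^ k]) (hc : (3 : ℤ) ^ (v + 5) ∣ c * 3 ^ k) :
      c * x ≡ c * y [ZMOD 3 ^ (v + 5)] := h.mul_left'.of_dvd hc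
  have h1 := hscale (theta_one_modEq ha hz hF5 hK) (c := n) (by
    rw [pow_add]; exact mul_dvd_mul_right (by exact_mod_cast hvn) _)
  have h2 := hscale (theta_two_modEq ha hz hF5 hK) (c := n.choose 2) (by
    rw [pow_add]
    exact mul_dvd_mul_right (three_pow_dvd_of_dvd_two_mul (by simpa [mul_comm] using hC 2)) _)
  have h3 := hscale (theta_three_modEq ha hz hF5 hK) (c := n.choose 3) (by
    rw [pow_add, show (3 : ℤ) ^ 6 = 3 * 3 ^ 5 by norm_num, ← mul_assoc]
    exact mul_dvd_mul_right (by simpa using hC 3) _)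
  have h4 := hscale (theta_four_modEq hz hK) (c := n.choose 4) (by
    rw [pow_add]
    refine mul_dvd_mul_right (three_pow_dvd_of_dvd_two_mul (three_pow_dvd_of_dvd_two_mul ?_)) _
    simpa [← mul_assoc, mul_comm] using hC 4)
  calc (3 * a - 2) * (2 * (1 - z) * z * twistedPowSum z (3 * (v + 5)) (2 * n))
      ≡ (3 * a - 2) * (2 * (1 - z) * z * ∑ j ∈ range 5, (n.choose j : ℤ) * theta z (v + 5) j)
        [ZMOD 3 ^ (v + 5)] := by
        gcongr
        exact twistedPowSum_modEq_sum_theta hz hn hvn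
    _ = (3 * a - 2) * (2 * (1 - z) * z * theta z (v + 5) 0)
        + (3 * a - 2) * (n * (2 * (1 - z) * z * theta z (v + 5) 1)
          + n.choose 2 * (2 * (1 - z) * z * theta z (v + 5) 2)
          + n.choose 3 * (2 * (1 - z) * z * theta z (v + 5) 3)
          + n.choose 4 * (2 * (1 - z) * z * theta z (v + 5) 4)) := by
        simp only [sum_range_succ, range_one, sum_singleton, Nat.choose_zero_right, Nat.cast_one,
          one_mul, Nat.choose_one_right]
        ring
    _ ≡ 2 * a * (1 + z) + (3 * a - 2) * (n * (15 * a ^ 2 * (1 + z))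
          + n.choose 2 * (72 * a ^ 2 * (1 + z)) + n.choose 3 * (54 * a ^ 2 * (1 + z))
          + n.choose 4 * 0) [ZMOD 3 ^ (v + 5)] := by
        refine Int.ModEq.add ?_ ((((h1.add h2).add h3).add h4).mul_left _)
        exact theta_zero_modEq hF ((pow_dvd_pow_of_dvd hz _).trans (pow_dvd_pow z (by omega)))
    _ = (1 + z) * (2 * a + (3 * a - 2) * a ^ 2 * (9 * n ^ 3 + 9 * n ^ 2 - 3 * n)) := by
        linear_combination (3 * a - 2) * (1 + z) * a ^ 2
          * (36 * choose_two_mul_two n + 9 * choose_three_mul_six n)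

theorem stmt18_general (a : ℤ) (h3 : (3 : ℤ) ∣ a) (n : ℕ) (hn : 2 ≤ n) :
    ∀ b : ℤ, (3 * a - 2) * b ≡ 1 [ZMOD (3 : ℤ) ^ (padicValNat 3 n + 5)] →
      EZ a (2 * n) ≡ 2 * a * b + 9 * a ^ 2 * n ^ 3 + 9 * a ^ 2 * n ^ 2 - 3 * a ^ 2 * n
        [ZMOD (3 : ℤ) ^ (padicValNat 3 n + 5)] := by
  intro b hb
  set N := padicValNat 3 n + 5 with hN
  obtain ⟨z, hz, hF⟩ := exists_three_dvd_root h3 N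
  have hE := one_add_mul_EZ_modEq (L := 3 * N) hF
    ((pow_dvd_pow_of_dvd hz N).trans (pow_dvd_pow z (by omega))) (m := n) (by omega)
  have hT := twistedPowSum_modEq h3 hz hn pow_padicValNat_dvd hF
  rw [← hN] at hT
  have hcop : IsCoprime ((3 : ℤ) ^ N) (1 + z) := by
    obtain ⟨w, rfl⟩ := hz
    exact IsCoprime.pow_left ⟨-w, 1, by ring⟩
  -- `hE`, multiplied by `(3a - 2) b ≡ 1`, and `hT` combine linearly to the claim times `1 + z`
  have key : (3 : ℤ) ^ N ∣ (1 + z)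
      * (2 * a * b + 9 * a ^ 2 * n ^ 3 + 9 * a ^ 2 * n ^ 2 - 3 * a ^ 2 * n - EZ a (2 * n)) := by
    refine (dvd_add (dvd_add hE.dvd (hT.dvd.mul_left b)) (hb.dvd.mul_left
      ((1 + z) * a ^ 2 * (9 * n ^ 3 + 9 * n ^ 2 - 3 * n)
        - 2 * (1 - z) * z * twistedPowSum z (3 * N) (2 * n)))).trans (dvd_of_eq ?_)
    ring
  exact Int.modEq_iff_dvd.mpr (hcop.dvd_of_dvd_mul_left key)

theorem stmt18 (a : ℤ) (ha : a ≠ 0) (h3 : (3 : ℤ) ∣ a) (n : ℕ) (hn : 2 ≤ n) :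
    ∀ b : ℤ, (3 * a - 2) * b ≡ 1 [ZMOD (3 : ℤ) ^ (padicValNat 3 n + 5)] →
      EZ a (2 * n) ≡ 2 * a * b + 9 * a ^ 2 * n ^ 3 + 9 * a ^ 2 * n ^ 2 - 3 * a ^ 2 * n
        [ZMOD (3 : ℤ) ^ (padicValNat 3 n + 5)] :=
  stmt18_general a h3 n hn
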